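/- Let F be a field and B = (b_1, ..., b_k) ∈ F^{k×k} a non-singular matrix with columns b_1,...,b_k. Then there is a permutation π of {1,...,k} such that the matrix A = (b_{π(1)}, ..., b_{π(k)}) satisfies: for every i ∈ {1,...,k}, A_{ii} ≠ 0 and det(A_i) ≠ 0, where A_i denotes the top-left i×i submatrix of A. -/

import Mathlib

/-!
Induction on `k`. Expanding `det B ≠ 0` along the last row gives a column `j` with `B k j ≠ 0`
whose complementary minor (delete row `k` and column `j`) is non-singular. Order the columns of
that minor by induction and put column `j` last: the leading principal submatrices of size `< k`
are those of the reordered minor, and the full one is `B` with permuted columns.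
-/

open Equiv

theorem Equiv.Perm.exists_apply_last_and_apply_castSucc {k : ℕ} (σ : Perm (Fin k))
    (j : Fin (k + 1)) :
    ∃ π : Perm (Fin (k + 1)), π (Fin.last k) = j ∧ ∀ i, π i.castSucc = j.succAbove (σ i) :=
  ⟨(finSuccEquivLast.trans (optionCongr σ)).trans (finSuccEquiv' j).symm, by simp, by simp⟩

namespace Matrix

variable {R : Type*} [CommRing R]

theorem det_submatrix_id_perm_ne_zero {n : Type*} [Fintype n] [DecidableEq n]
    {M : Matrix n n R} (hM : M.det ≠ 0) (σ : Perm n) : (M.submatrix id σ).det ≠ 0 := by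
  rw [det_permute']
  exact fun h => hM (((Perm.sign σ).isUnit.map (Int.castRingHom R)).mul_right_eq_zero.mp h)

theorem exists_ne_zero_and_det_submatrix_succAbove_ne_zero {k : ℕ}
    {B : Matrix (Fin (k + 1)) (Fin (k + 1)) R} (hB : B.det ≠ 0) (i : Fin (k + 1)) :
    ∃ j, B i j ≠ 0 ∧ (B.submatrix i.succAbove j.succAbove).det ≠ 0 := by
  rw [det_succ_row B i] at hB
  obtain ⟨j, -, hj⟩ := Finset.exists_ne_zero_of_sum_ne_zero hB
  exact ⟨j, right_ne_zero_of_mul (left_ne_zero_of_mul hj), right_ne_zero_of_mul hj⟩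

theorem exists_perm_diag_ne_zero_and_det_leading_submatrix_ne_zero :
    ∀ {k : ℕ} {B : Matrix (Fin k) (Fin k) R}, B.det ≠ 0 →
    ∃ π : Perm (Fin k), (∀ i, B.submatrix id π i i ≠ 0) ∧
      ∀ i : Fin k, ((B.submatrix id π).submatrix (Fin.castLE i.isLt) (Fin.castLE i.isLt)).det ≠ 0
  | 0, _, _ => ⟨1, finZeroElim, finZeroElim⟩
  | k + 1, B, hB => by
    obtain ⟨j, hBj, hC⟩ := exists_ne_zero_and_det_submatrix_succAbove_ne_zero hB (Fin.last k)
    rw [Fin.succAbove_last] at hC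
    obtain ⟨σ, hσdiag, hσminor⟩ :=
      exists_perm_diag_ne_zero_and_det_leading_submatrix_ne_zero hC
    obtain ⟨π, hπlast, hπcastSucc⟩ := σ.exists_apply_last_and_apply_castSucc j
    refine ⟨π, Fin.lastCases ?_ fun i => ?_, Fin.lastCases ?_ fun i => ?_⟩
    · simpa [hπlast] using hBj
    · simpa [hπcastSucc] using hσdiag i
    · exact det_submatrix_id_perm_ne_zero hB π
    · have hrestrict : (B.submatrix id π).submatrix Fin.castSucc Fin.castSucc =
          (B.submatrix Fin.castSucc j.succAbove).submatrix id σ := by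
        ext a b
        simp [hπcastSucc]
      change (((B.submatrix id π).submatrix Fin.castSucc Fin.castSucc).submatrix
        (Fin.castLE i.isLt) (Fin.castLE i.isLt)).det ≠ 0
      rw [hrestrict]
      exact hσminor i

end Matrix

theorem stmt4 {F : Type*} [Field F] {k : ℕ} (B : Matrix (Fin k) (Fin k) F)
    (hB : B.det ≠ 0) :
    ∃ π : Equiv.Perm (Fin k),
      (∀ i : Fin k, B.submatrix id π i i ≠ 0) ∧
      (∀ i : Fin k,
        ((B.submatrix id π).submatrix (Fin.castLE i.isLt) (Fin.castLE i.isLt)).det ≠ 0) :=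
  Matrix.exists_perm_diag_ne_zero_and_det_leading_submatrix_ne_zero hB
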